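/- Let m ≥ 1 be an integer. The direct product group (ℤ/3ᵐ) × GL₂(𝔽₃) contains exactly two conjugacy classes of subgroups isomorphic to SL₂(𝔽₃): there exist two subgroups, each isomorphic to SL₂(𝔽₃), that are not conjugate to each other, and every subgroup isomorphic to SL₂(𝔽₃) is conjugate to one of these two. -/
import Mathlib

open Matrix

abbrev SL3 := Matrix.SpecialLinearGroup (Fin 2) (ZMod 3)

instance : DecidableEq SL3 := fun a b => decidable_of_iff (a.val = b.val) Subtype.ext_iff.symm

def Uel : SL3 := ⟨!![1,1;0,1], by decide⟩
def Lel : SL3 := ⟨!![1,0;1,1], by decide⟩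
def Uinv : SL3 := ⟨!![1,2;0,1], by decide⟩
def b0 : SL3 := ⟨!![0,1;2,0], by decide⟩
def b0inv : SL3 := ⟨!![0,2;1,0], by decide⟩
def c0 : SL3 := ⟨!![0,1;2,0], by decide⟩
def c0inv : SL3 := ⟨!![0,2;1,0], by decide⟩

def pow4 (A : SL3) : SL3 := (A*A)*(A*A)

def phi (A : SL3) : ZMod 3 := if pow4 A = 1 then 0 else if pow4 (A * Uinv) = 1 then 1 else 2

set_option maxRecDepth 1000000 in
set_option maxHeartbeats 1000000 in
lemma basic_facts : Uel^3 = 1 ∧ Lel^3 = 1 ∧ Uel * Uinv = 1 ∧ b0 * b0inv = 1 ∧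
    c0 * c0inv = 1 ∧ phi 1 = 0 ∧ phi Uel = 1 ∧ phi Lel = 2 ∧
    Lel = b0 * Uinv * b0inv := by decide

set_option maxRecDepth 1000000 in
set_option maxHeartbeats 1000000 in
lemma phi_mul_U : ∀ a : SL3, phi (a * Uel) = phi a + 1 := by decide

set_option maxRecDepth 1000000 in
set_option maxHeartbeats 1000000 in
lemma phi_mul_L : ∀ a : SL3, phi (a * Lel) = phi a + 2 := by decide

def wl : List (SL3 × ℕ × ℕ × ℕ × ℕ) := [
  (⟨!![0,1;2,0], by decide⟩, 0, 2, 1, 2),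
  (⟨!![0,1;2,1], by decide⟩, 0, 0, 1, 2),
  (⟨!![0,1;2,2], by decide⟩, 0, 1, 1, 2),
  (⟨!![0,2;1,0], by decide⟩, 0, 1, 2, 1),
  (⟨!![0,2;1,1], by decide⟩, 0, 0, 2, 1),
  (⟨!![0,2;1,2], by decide⟩, 0, 2, 2, 1),
  (⟨!![1,0;0,1], by decide⟩, 0, 0, 0, 0),
  (⟨!![1,0;1,1], by decide⟩, 0, 0, 0, 1),
  (⟨!![1,0;2,1], by decide⟩, 0, 0, 0, 2),
  (⟨!![1,1;0,1], by decide⟩, 0, 0, 1, 0),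
  (⟨!![1,1;1,2], by decide⟩, 0, 1, 1, 0),
  (⟨!![1,1;2,0], by decide⟩, 0, 2, 1, 0),
  (⟨!![1,2;0,1], by decide⟩, 0, 0, 2, 0),
  (⟨!![1,2;1,0], by decide⟩, 0, 1, 2, 0),
  (⟨!![1,2;2,2], by decide⟩, 0, 2, 2, 0),
  (⟨!![2,0;0,2], by decide⟩, 1, 1, 1, 1),
  (⟨!![2,0;1,2], by decide⟩, 1, 1, 1, 0),
  (⟨!![2,0;2,2], by decide⟩, 1, 1, 1, 2),
  (⟨!![2,1;0,2], by decide⟩, 0, 1, 1, 1),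
  (⟨!![2,1;1,1], by decide⟩, 0, 0, 1, 1),
  (⟨!![2,1;2,0], by decide⟩, 0, 2, 1, 1),
  (⟨!![2,2;0,2], by decide⟩, 0, 2, 2, 2),
  (⟨!![2,2;1,0], by decide⟩, 0, 1, 2, 2),
  (⟨!![2,2;2,1], by decide⟩, 0, 0, 2, 2)]

set_option maxRecDepth 1000000 in
set_option maxHeartbeats 2000000 in
lemma hwl : ∀ r ∈ wl, r.1 = Uel^r.2.1 * Lel^r.2.2.1 * Uel^r.2.2.2.1 * Lel^r.2.2.2.2 := by
  decide

set_option maxRecDepth 1000000 in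
set_option maxHeartbeats 2000000 in
lemma hmem : ∀ s : SL3, ∃ r ∈ wl, s = r.1 := by decide

set_option maxRecDepth 1000000 in
set_option maxHeartbeats 2000000 in
lemma ker_lemma : ∀ a : SL3, a^3 = 1 → a ≠ 1 → (a * (c0 * a * c0inv))^3 ≠ 1 := by decide

set_option maxRecDepth 1000000 in
set_option maxHeartbeats 2000000 in
lemma nine_to_three : ∀ x : SL3, x^9 = 1 → x^3 = 1 := by decide

def wmat : Matrix (Fin 2) (Fin 2) (ZMod 3) := !![1,0;0,2]

lemma hww : wmat * wmat = 1 := by decide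

lemma hdet_w (s : SL3) : (wmat * s.val * wmat).det = 1 := by
  rw [Matrix.det_mul, Matrix.det_mul, s.prop]
  decide

def sigmaW : SL3 →* SL3 where
  toFun s := ⟨wmat * s.val * wmat, hdet_w s⟩
  map_one' := by
    apply Subtype.ext
    show wmat * 1 * wmat = 1
    rw [mul_one, hww]
  map_mul' a b := by
    apply Subtype.ext
    show wmat * (a.val * b.val) * wmat = (wmat * a.val * wmat) * (wmat * b.val * wmat)
    have h : wmat * a.val * wmat * (wmat * b.val * wmat)
        = wmat * a.val * ((wmat * wmat) * (b.val * wmat)) := by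
      simp only [mul_assoc]
    rw [h, hww, one_mul]
    simp only [mul_assoc]

lemma sigmaW_invol (s : SL3) : sigmaW (sigmaW s) = s := by
  apply Subtype.ext
  show wmat * (wmat * s.val * wmat) * wmat = s.val
  calc wmat * (wmat * s.val * wmat) * wmat
      = (wmat * wmat) * s.val * (wmat * wmat) := by simp only [mul_assoc]
    _ = s.val := by rw [hww, one_mul, mul_one]

set_option maxRecDepth 1000000 in
set_option maxHeartbeats 2000000 in
lemma phi_sigmaW : ∀ s : SL3, phi (sigmaW s) = - phi s := by decide

lemma units_zmod3_sq : ∀ u : (ZMod 3)ˣ, u^2 = 1 := by decide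

lemma zmod3_exp : ∀ x : ZMod 3, x.val % 3 = (2 * (-x).val) % 3 := by decide

lemma decomp (s : SL3) : ∃ x y z w : ℕ, s = Uel^x * Lel^y * Uel^z * Lel^w := by
  obtain ⟨r, hr, hsr⟩ := hmem s
  exact ⟨r.2.1, r.2.2.1, r.2.2.2.1, r.2.2.2.2, by rw [hsr]; exact hwl r hr⟩

lemma phi_pow_U (a : SL3) (k : ℕ) : phi (a * Uel^k) = phi a + k := by
  induction k with
  | zero => simp
  | succ n ih =>
    rw [pow_succ, ← mul_assoc, phi_mul_U, ih]
    push_cast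
    ring

lemma phi_pow_L (a : SL3) (k : ℕ) : phi (a * Lel^k) = phi a + 2*k := by
  induction k with
  | zero => simp
  | succ n ih =>
    rw [pow_succ, ← mul_assoc, phi_mul_L, ih]
    push_cast
    ring

lemma phi_mul (a b : SL3) : phi (a * b) = phi a + phi b := by
  obtain ⟨x, y, z, w, rfl⟩ := decomp b
  have h1 : a * (Uel^x * Lel^y * Uel^z * Lel^w) = a * Uel^x * Lel^y * Uel^z * Lel^w := by
    simp only [mul_assoc]
  have h2 : Uel^x * Lel^y * Uel^z * Lel^w = 1 * Uel^x * Lel^y * Uel^z * Lel^w := by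
    rw [one_mul]
  rw [h1, phi_pow_L, phi_pow_U, phi_pow_L, phi_pow_U, h2, phi_pow_L, phi_pow_U,
    phi_pow_L, phi_pow_U, basic_facts.2.2.2.2.2.1]
  ring

lemma pow3k : ∀ (k : ℕ) (x : SL3), x^(3^k) = 1 → x^3 = 1 := by
  intro k
  induction k with
  | zero => intro x h; rw [pow_zero, pow_one] at h; rw [h, one_pow]
  | succ j ih =>
    intro x h
    apply nine_to_three
    have h3 : (x^3)^(3^j) = 1 := by
      rw [← pow_mul]
      rw [show 3 * 3^j = 3^(j+1) from (pow_succ' 3 j).symm]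
      exact h
    have := ih (x^3) h3
    rw [← pow_mul] at this
    exact this

section gam

variable {M : Type} [CommGroup M]

lemma pow_mod3 (c : M) (hc : c^3 = 1) (n : ℕ) : c^(n % 3) = c^n := by
  conv_rhs => rw [← Nat.div_add_mod n 3]
  rw [pow_add, pow_mul, hc, one_pow, one_mul]

open Classical in
noncomputable def gammaHom (c : M) : SL3 →* M :=
  if hc : c^3 = 1 then
    { toFun := fun s => c ^ (phi s).val
      map_one' := by show c ^ (phi 1).val = 1; rw [basic_facts.2.2.2.2.2.1, ZMod.val_zero, pow_zero]
      map_mul' := fun a b => by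
        show c ^ (phi (a*b)).val = c ^ (phi a).val * c ^ (phi b).val
        rw [phi_mul, ZMod.val_add, pow_mod3 c hc, pow_add] }
  else 1

lemma gammaHom_apply {c : M} (hc : c^3 = 1) (s : SL3) : gammaHom c s = c ^ (phi s).val := by
  unfold gammaHom
  rw [dif_pos hc]
  rfl

lemma hom_ext_UL (f g : SL3 →* M) (hU : f Uel = g Uel) (hL : f Lel = g Lel) : f = g := by
  ext s
  obtain ⟨x, y, z, w, rfl⟩ := decomp s
  simp only [_root_.map_mul, map_pow, hU, hL]

end gam

section gam2

variable {M : Type} [CommGroup M]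

noncomputable def GammaP (c : M) :
    SL3 →* M × Matrix.GeneralLinearGroup (Fin 2) (ZMod 3) :=
  (gammaHom c).prod (Matrix.SpecialLinearGroup.toGL)

lemma toGL_inj : Function.Injective
    (Matrix.SpecialLinearGroup.toGL : SL3 →* Matrix.GeneralLinearGroup (Fin 2) (ZMod 3)) := by
  intro a b h
  exact Subtype.ext (congrArg Units.val h)

lemma GammaP_inj (c : M) : Function.Injective (GammaP c) := by
  intro a b h
  exact toGL_inj (congrArg Prod.snd h)

lemma GammaP_apply (c : M) (s : SL3) :
    GammaP c s = (gammaHom c s, Matrix.SpecialLinearGroup.toGL s) := rfl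

end gam2

lemma subgroup_eq_graph {M : Type} [CommGroup M] {m : ℕ}
    (hM : ∀ t : M, t ^ (3^m) = 1)
    (H : Subgroup (M × Matrix.GeneralLinearGroup (Fin 2) (ZMod 3)))
    (e : H ≃* SL3) : ∃ c : M, c ^ 3 = 1 ∧ H = (GammaP c).range := by
  let ρ : SL3 →* M × Matrix.GeneralLinearGroup (Fin 2) (ZMod 3) :=
    H.subtype.comp e.symm.toMonoidHom
  have hρinj : Function.Injective ρ := by
    intro a b hab
    exact e.symm.injective (Subtype.ext hab)
  have hρmem : ∀ s, ρ s ∈ H := fun s => (e.symm s).2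
  have hρsurj : ∀ x ∈ H, ∃ s, ρ s = x := by
    intro x hx
    refine ⟨e ⟨x, hx⟩, ?_⟩
    show ((e.symm (e ⟨x, hx⟩)) : M × _) = x
    rw [MulEquiv.symm_apply_apply]
  let ρ₂ := (MonoidHom.snd M _).comp ρ
  have hker3 : ∀ x : SL3, ρ₂ x = 1 → x^3 = 1 := by
    intro x hx
    have hpow : ρ (x^(3^m)) = 1 := by
      rw [_root_.map_pow]
      have h1 : ((ρ x)^(3^m)).1 = 1 := by rw [Prod.pow_fst]; exact hM _
      have h2 : ((ρ x)^(3^m)).2 = 1 := by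
        rw [Prod.pow_snd]
        show (ρ₂ x)^(3^m) = 1
        rw [hx, one_pow]
      exact Prod.ext h1 h2
    exact pow3k m x (hρinj (by rw [hpow, _root_.map_one]))
  have hρ₂inj : Function.Injective ρ₂ := by
    rw [injective_iff_map_eq_one]
    intro a ha
    by_contra hne
    have h3 := hker3 a ha
    have hcker : ρ₂ (c0 * a * c0inv) = 1 := by
      rw [_root_.map_mul, _root_.map_mul, ha, mul_one, ← _root_.map_mul, basic_facts.2.2.2.2.1, _root_.map_one]
    have hx : ρ₂ (a * (c0 * a * c0inv)) = 1 := by rw [_root_.map_mul, ha, hcker, one_mul]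
    exact ker_lemma a h3 hne (hker3 _ hx)
  have hdet : ∀ s : SL3, ((ρ₂ s) : Matrix (Fin 2) (Fin 2) (ZMod 3)).det = 1 := by
    have hα : ∀ s : SL3, (Units.map (Matrix.detMonoidHom)).comp ρ₂ s = 1 := by
      set α := (Units.map (Matrix.detMonoidHom)).comp ρ₂ with hαdef
      have hone : ∀ u : SL3, u^3 = 1 → α u = 1 := by
        intro u hu
        have h3 : (α u)^3 = 1 := by rw [← _root_.map_pow, hu, _root_.map_one]
        have h2 : (α u)^2 = 1 := units_zmod3_sq _
        have h4 : (α u)^3 = (α u)^2 * α u := pow_succ _ 2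
        rw [h3, h2, one_mul] at h4
        exact h4.symm
      intro s
      obtain ⟨x, y, z, w, rfl⟩ := decomp s
      have hUα := hone Uel basic_facts.1
      have hLα := hone Lel basic_facts.2.1
      simp only [_root_.map_mul, _root_.map_pow, hUα, hLα, one_pow, one_mul]
    intro s
    have h := congrArg Units.val (hα s)
    rw [MonoidHom.comp_apply, Units.coe_map] at h
    simpa using h
  let σ : SL3 →* SL3 :=
    { toFun := fun s => ⟨((ρ₂ s) : Matrix (Fin 2) (Fin 2) (ZMod 3)), hdet s⟩
      map_one' := Subtype.ext (show ((ρ₂ 1 : GL (Fin 2) (ZMod 3)) : Matrix (Fin 2) (Fin 2) (ZMod 3)) = 1 by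
        rw [_root_.map_one]; rfl)
      map_mul' := fun a b => Subtype.ext (show ((ρ₂ (a*b) : GL (Fin 2) (ZMod 3)) : Matrix (Fin 2) (Fin 2) (ZMod 3))
          = ((ρ₂ a : GL (Fin 2) (ZMod 3)) : Matrix (Fin 2) (Fin 2) (ZMod 3)) * ((ρ₂ b : GL (Fin 2) (ZMod 3)) : Matrix (Fin 2) (Fin 2) (ZMod 3)) by
        rw [_root_.map_mul]; rfl) }
  have hσinj : Function.Injective σ := by
    intro a b h
    exact hρ₂inj (Units.ext (by exact congrArg Subtype.val h))
  have hσsurj : Function.Surjective σ := Finite.injective_iff_surjective.mp hσinj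
  have htoGLσ : ∀ s, Matrix.SpecialLinearGroup.toGL (σ s) = ρ₂ s := by
    intro s; exact Units.ext (by exact congrArg Subtype.val (rfl : σ s = σ s))
  let σe : SL3 ≃* SL3 := MulEquiv.ofBijective σ ⟨hσinj, hσsurj⟩
  let χ : SL3 →* M := ((MonoidHom.fst M _).comp ρ).comp σe.symm.toMonoidHom
  have hUc : (χ Uel)^3 = 1 := by rw [← _root_.map_pow, basic_facts.1, _root_.map_one]
  refine ⟨χ Uel, hUc, ?_⟩
  have hχ : χ = gammaHom (χ Uel) := by
    apply hom_ext_UL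
    · rw [gammaHom_apply hUc, basic_facts.2.2.2.2.2.2.1, ZMod.val_one, pow_one]
    · rw [gammaHom_apply hUc, basic_facts.2.2.2.2.2.2.2.1]
      have hval2 : ((2 : ZMod 3)).val = 2 := rfl
      rw [hval2]
      have hb : χ Lel = χ b0 * χ Uinv * χ b0inv := by
        rw [← _root_.map_mul, ← _root_.map_mul, ← basic_facts.2.2.2.2.2.2.2.2]
      have hbb : χ b0 * χ b0inv = 1 := by
        rw [← _root_.map_mul, basic_facts.2.2.2.1, _root_.map_one]
      have hUinvm : χ Uel * χ Uinv = 1 := by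
        rw [← _root_.map_mul, basic_facts.2.2.1, _root_.map_one]
      have hUinv2 : χ Uinv = (χ Uel)^2 := by
        have h1 : (χ Uel)⁻¹ = χ Uinv := inv_eq_of_mul_eq_one_right hUinvm
        have h2 : χ Uel * (χ Uel)^2 = 1 := by
          rw [← pow_succ']
          exact hUc
        rw [← h1, inv_eq_of_mul_eq_one_right h2]
      rw [hb, hUinv2]
      calc χ b0 * (χ Uel)^2 * χ b0inv = (χ Uel)^2 * (χ b0 * χ b0inv) := by
            rw [mul_comm (χ b0), mul_assoc]
        _ = (χ Uel)^2 := by rw [hbb, mul_one]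
  have key : ∀ s, ρ s = GammaP (χ Uel) (σ s) := by
    intro s
    have h1 : (ρ s).1 = gammaHom (χ Uel) (σ s) := by
      have hs : χ (σe s) = (ρ s).1 := by
        show (ρ (σe.symm (σe s))).1 = (ρ s).1
        rw [MulEquiv.symm_apply_apply]
      rw [hχ] at hs
      exact hs.symm
    have h2 : (ρ s).2 = Matrix.SpecialLinearGroup.toGL (σ s) := (htoGLσ s).symm
    rw [GammaP_apply]
    exact Prod.ext h1 h2
  ext x
  constructor
  · intro hx
    obtain ⟨s, rfl⟩ := hρsurj x hx
    exact ⟨σ s, (key s).symm⟩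
  · rintro ⟨u, rfl⟩
    obtain ⟨s, rfl⟩ := hσsurj u
    rw [← key s]
    exact hρmem s

lemma map_conj_one {G : Type*} [Group G] (K : Subgroup G) :
    Subgroup.map (MulAut.conj (1 : G)).toMonoidHom K = K := by
  have h : (MulAut.conj (1 : G)).toMonoidHom = MonoidHom.id G := by
    ext x
    simp
  rw [h, Subgroup.map_id]

noncomputable def Wu : Matrix.GeneralLinearGroup (Fin 2) (ZMod 3) :=
  (Units.mk wmat wmat hww hww : (Matrix (Fin 2) (Fin 2) (ZMod 3))ˣ)

/-- For `m ≥ 1`, the group `(ℤ/3ᵐ) × GL₂(𝔽₃)` contains exactly two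
conjugacy classes of subgroups isomorphic to `SL₂(𝔽₃)`: there are two such
subgroups which are not conjugate, and every subgroup isomorphic to `SL₂(𝔽₃)` is
conjugate to one of them. -/
theorem two_conjugacy_classes_of_sl2 (m : ℕ) (hm : 1 ≤ m) :
    ∃ H₁ H₂ : Subgroup (Multiplicative (ZMod (3 ^ m)) ×
        Matrix.GeneralLinearGroup (Fin 2) (ZMod 3)),
      Nonempty (H₁ ≃* Matrix.SpecialLinearGroup (Fin 2) (ZMod 3)) ∧
      Nonempty (H₂ ≃* Matrix.SpecialLinearGroup (Fin 2) (ZMod 3)) ∧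
      (¬ ∃ g, Subgroup.map (MulAut.conj g).toMonoidHom H₁ = H₂) ∧
      ∀ H : Subgroup (Multiplicative (ZMod (3 ^ m)) ×
          Matrix.GeneralLinearGroup (Fin 2) (ZMod 3)),
        Nonempty (H ≃* Matrix.SpecialLinearGroup (Fin 2) (ZMod 3)) →
        (∃ g, Subgroup.map (MulAut.conj g).toMonoidHom H₁ = H) ∨
        (∃ g, Subgroup.map (MulAut.conj g).toMonoidHom H₂ = H) := by
  haveI : NeZero (3^m) := ⟨pow_ne_zero m (by norm_num)⟩
  have hmm : m - 1 + 1 = m := Nat.succ_pred_eq_of_pos hm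
  have h3m : (3:ℕ) * 3^(m-1) = 3^m := by
    conv_rhs => rw [← hmm]
    rw [pow_succ']
  let g₀ : Multiplicative (ZMod (3^m)) := Multiplicative.ofAdd ((3^(m-1) : ℕ) : ZMod (3^m))
  have hg₀ : g₀^3 = 1 := by
    show Multiplicative.ofAdd _ ^ 3 = 1
    rw [← ofAdd_nsmul]
    have h0 : (3 : ℕ) • ((3^(m-1) : ℕ) : ZMod (3^m)) = 0 := by
      have h1 : (3:ℕ) • ((3^(m-1) : ℕ) : ZMod (3^m)) = ((3 * 3^(m-1) : ℕ) : ZMod (3^m)) := by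
        push_cast
        ring
      rw [h1, h3m, ZMod.natCast_self]
    rw [h0, ofAdd_zero]
  have hg₀ne : g₀ ≠ 1 := by
    intro h
    have h2 : ((3^(m-1) : ℕ) : ZMod (3^m)) = 0 := by
      have h' := congrArg Multiplicative.toAdd h
      exact h'
    rw [ZMod.natCast_eq_zero_iff] at h2
    have hlt : (3:ℕ)^(m-1) < 3^m := Nat.pow_lt_pow_right (by norm_num) (by omega)
    exact absurd (Nat.le_of_dvd (by positivity) h2) (by omega)
  have hExp : ∀ t : Multiplicative (ZMod (3^m)), t ^ (3^m) = 1 := by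
    intro t
    have h0 : (3^m : ℕ) • (Multiplicative.toAdd t) = 0 := by
      rw [nsmul_eq_mul]
      norm_cast
      rw [ZMod.natCast_self, zero_mul]
    calc t ^ (3^m) = Multiplicative.ofAdd ((3^m : ℕ) • Multiplicative.toAdd t) := by
          rw [ofAdd_nsmul, ofAdd_toAdd]
      _ = 1 := by rw [h0, ofAdd_zero]
  have hg₀2 : (g₀^2)^3 = 1 := by
    rw [← pow_mul, mul_comm, pow_mul, hg₀, one_pow]
  refine ⟨(GammaP (1 : Multiplicative (ZMod (3^m)))).range, (GammaP g₀).range,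
    ⟨(MonoidHom.ofInjective (GammaP_inj 1)).symm⟩,
    ⟨(MonoidHom.ofInjective (GammaP_inj g₀)).symm⟩, ?_, ?_⟩
  · rintro ⟨g, hg⟩
    have hmem2 : GammaP g₀ Uel ∈ (GammaP g₀).range := ⟨Uel, rfl⟩
    rw [← hg, Subgroup.mem_map] at hmem2
    obtain ⟨x, hx, hgx⟩ := hmem2
    obtain ⟨s, rfl⟩ := hx
    have h1 : (GammaP (1 : Multiplicative (ZMod (3^m))) s).1 = 1 := by
      show gammaHom 1 s = 1
      rw [gammaHom_apply (one_pow 3), one_pow]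
    have h2 : (GammaP g₀ Uel).1 = g₀ := by
      show gammaHom g₀ Uel = g₀
      rw [gammaHom_apply hg₀, basic_facts.2.2.2.2.2.2.1, ZMod.val_one, pow_one]
    have h3 := congrArg Prod.fst hgx
    have hL : ((MulAut.conj g).toMonoidHom (GammaP (1 : Multiplicative (ZMod (3^m))) s)).1
        = 1 := by
      simp [MulAut.conj_apply, h1]
    rw [hL, h2] at h3
    exact hg₀ne h3.symm
  · intro H hne
    obtain ⟨e⟩ := hne
    obtain ⟨c, hc3, hHc⟩ := subgroup_eq_graph hExp H e
    have hcases : c = 1 ∨ c = g₀ ∨ c = g₀^2 := by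
      set t := Multiplicative.toAdd c with ht
      have h3t : ((3:ℕ) : ZMod (3^m)) * t = 0 := by
        have h4 := congrArg Multiplicative.toAdd hc3
        rw [toAdd_pow] at h4
        rw [← nsmul_eq_mul]
        simpa using h4
      have hdvd : (3:ℕ)^m ∣ 3 * t.val := by
        rw [← ZMod.natCast_eq_zero_iff]
        have h5 : ((3 * t.val : ℕ) : ZMod (3^m)) = ((3:ℕ) : ZMod (3^m)) * t := by
          push_cast
          rw [ZMod.natCast_val, ZMod.cast_id]
        rw [h5, h3t]
      have hdvd2 : (3:ℕ)^(m-1) ∣ t.val := by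
        have h6 : (3:ℕ) * 3^(m-1) ∣ 3 * t.val := by rw [h3m]; exact hdvd
        exact (mul_dvd_mul_iff_left (by norm_num : (3:ℕ) ≠ 0)).mp h6
      obtain ⟨k, hk⟩ := hdvd2
      have hklt : k < 3 := by
        have hvlt : t.val < 3^m := ZMod.val_lt t
        rw [hk, ← h3m, mul_comm 3 (3^(m-1))] at hvlt
        exact Nat.lt_of_mul_lt_mul_left hvlt
      have htv : t = ((3^(m-1)*k : ℕ) : ZMod (3^m)) := by
        rw [← hk, ZMod.natCast_val, ZMod.cast_id]
      have hcval : c = Multiplicative.ofAdd (((3^(m-1)*k : ℕ)) : ZMod (3^m)) := by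
        rw [← ofAdd_toAdd c, ← ht, htv]
      interval_cases k
      · left
        rw [hcval]
        simp
      · right; left
        rw [hcval]
        simp [g₀]
      · right; right
        rw [hcval, pow_two, ← ofAdd_add]
        congr 1
        push_cast
        ring
    rcases hcases with h | h | h
    · left
      refine ⟨1, ?_⟩
      rw [map_conj_one]
      rw [h] at hHc
      exact hHc.symm
    · right
      refine ⟨1, ?_⟩
      rw [map_conj_one]
      rw [h] at hHc
      exact hHc.symm
    · right
      refine ⟨(1, Wu), ?_⟩
      rw [h] at hHc
      rw [hHc]
      -- goal : map conj (1,Wu) (GammaP g₀).range = (GammaP (g₀^2)).range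
      rw [← MonoidHom.range_comp]
      have hcomp : ((MulAut.conj ((1 : Multiplicative (ZMod (3^m))), Wu)).toMonoidHom.comp
          (GammaP g₀)) = (GammaP (g₀^2)).comp sigmaW := by
        apply MonoidHom.ext
        intro s
        have h1 : (((MulAut.conj ((1 : Multiplicative (ZMod (3^m))), Wu)).toMonoidHom.comp
            (GammaP g₀)) s).1 = gammaHom g₀ s := by
          simp [MulAut.conj_apply, GammaP_apply]
        have h2 : (((MulAut.conj ((1 : Multiplicative (ZMod (3^m))), Wu)).toMonoidHom.comp
            (GammaP g₀)) s).2 = Wu * Matrix.SpecialLinearGroup.toGL s * Wu⁻¹ := by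
          simp [MulAut.conj_apply, GammaP_apply]
        apply Prod.ext
        · rw [h1]
          show gammaHom g₀ s = gammaHom (g₀^2) (sigmaW s)
          rw [gammaHom_apply hg₀, gammaHom_apply hg₀2, phi_sigmaW, ← pow_mul,
            ← pow_mod3 g₀ hg₀ ((phi s).val), ← pow_mod3 g₀ hg₀ (2 * (-(phi s)).val), zmod3_exp]
        · rw [h2]
          show Wu * Matrix.SpecialLinearGroup.toGL s * Wu⁻¹
              = Matrix.SpecialLinearGroup.toGL (sigmaW s)
          exact Units.ext (by exact rfl)
      have hsrange : sigmaW.range = ⊤ := by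
        rw [MonoidHom.range_eq_top]
        intro u
        exact ⟨sigmaW u, sigmaW_invol u⟩
      rw [hcomp, MonoidHom.range_comp, hsrange, ← MonoidHom.range_eq_map]
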